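/- For α, β > -1, n ≥ 1, k ≥ 0, and x ∈ [0,1]: B_n^{α,β}(e_k; x) = (nx+α+1)^{(k)} / (n+α+β+2)^{(k)}, where a^{(k)} = a(a+1)···(a+k-1) is the rising factorial. In particular, B_n^{α,β} maps polynomials of degree k to polynomials of degree k, and λ_{n,k} := n^k/(n+α+β+2)^{(k)} is an eigenvalue of B_n^{α,β} acting on polynomials. -/

import Mathlib

open MeasureTheory intervalIntegral Filter

/-- The Beta operator with Jacobi weights: `B_n^{α,β}(f;x)`. -/
noncomputable def Bop (n α β : ℝ) (f : ℝ → ℝ) (x : ℝ) : ℝ :=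
  (∫ t in (0:ℝ)..1, t ^ (n * x + α) * (1 - t) ^ (n - n * x + β) * f t) /
  (∫ t in (0:ℝ)..1, t ^ (n * x + α) * (1 - t) ^ (n - n * x + β))

/-- The `m`-th central moment `T_{n,m}^{α,β}(x)`. -/
noncomputable def T (n α β : ℝ) (m : ℕ) (x : ℝ) : ℝ :=
  Bop n α β (fun t => (t - x) ^ m) x

/-- The Beta operator extended to the limiting cases `α = -1` (interpolation at `0`)
and `β = -1` (interpolation at `1`). -/
noncomputable def BopE (n α β : ℝ) (f : ℝ → ℝ) (x : ℝ) : ℝ :=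
  if α = -1 ∧ x = 0 then f 0
  else if β = -1 ∧ x = 1 then f 1
  else Bop n α β f x

/-- The `m`-th central moment of the extended Beta operator. -/
noncomputable def TE (n α β : ℝ) (m : ℕ) (x : ℝ) : ℝ :=
  BopE n α β (fun t => (t - x) ^ m) x

/-!
For `f = t ^ j` the numerator of `B_n^{α,β}(f; x)` is again a Beta integral, with `nx + α`
raised by `j`; writing both Beta integrals through `Γ` and using `Γ(y + j) = Γ(y) y^{(j)}` gives
the quotient of rising factorials. As a polynomial in `x`, `(nx + α + 1)^{(j)}` has degree `j` and
leading coefficient `n ^ j`, so on polynomials the operator is upper triangular in the monomial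
basis with diagonal `λ_{n,j}`. These diagonal entries are strictly decreasing in `j`, so the
operator preserves degrees and has a monic eigenpolynomial of each degree.
-/

open Polynomial

theorem Real.Gamma_add_nat_eq_mul_ascPochhammer {y : ℝ} (hy : 0 < y) (j : ℕ) :
    Real.Gamma (y + j) = Real.Gamma y * (ascPochhammer ℝ j).eval y := by
  induction j with
  | zero => simp
  | succ j ih =>
    rw [Nat.cast_succ, ← add_assoc, Real.Gamma_add_one (by positivity), ih,
      ascPochhammer_succ_eval]
    ring

section BetaIntegral

variable {a b : ℝ}

theorem integral_rpow_mul_one_sub_rpow (ha : -1 < a) (hb : -1 < b) :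
    ∫ t in (0:ℝ)..1, t ^ a * (1 - t) ^ b =
      Real.Gamma (a + 1) * Real.Gamma (b + 1) / Real.Gamma (a + b + 2) := by
  have hbeta : Complex.betaIntegral (a + 1 : ℝ) (b + 1 : ℝ) =
      ((∫ t in (0:ℝ)..1, t ^ a * (1 - t) ^ b : ℝ) : ℂ) := by
    rw [Complex.betaIntegral, ← intervalIntegral.integral_ofReal]
    refine intervalIntegral.integral_congr fun t ht => ?_
    rw [Set.uIcc_of_le zero_le_one] at ht
    simp only [Complex.ofReal_add, Complex.ofReal_one, add_sub_cancel_right, Complex.ofReal_mul,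
      Complex.ofReal_cpow ht.1, Complex.ofReal_cpow (sub_nonneg.mpr ht.2), Complex.ofReal_sub]
  rw [Complex.betaIntegral_eq_Gamma_mul_div _ _ (by simp; linarith) (by simp; linarith),
    ← Complex.ofReal_add, Complex.Gamma_ofReal, Complex.Gamma_ofReal, Complex.Gamma_ofReal,
    show a + 1 + (b + 1) = a + b + 2 by ring] at hbeta
  exact_mod_cast hbeta.symm

theorem intervalIntegrable_rpow_mul_one_sub_rpow (ha : -1 < a) (hb : -1 < b) :
    IntervalIntegrable (fun t : ℝ => t ^ a * (1 - t) ^ b) volume 0 1 := by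
  -- a non-integrable function would have integral `0`
  refine intervalIntegrable_of_integral_ne_zero ?_
  rw [integral_rpow_mul_one_sub_rpow ha hb]
  have := Real.Gamma_pos_of_pos (s := a + 1) (by linarith)
  have := Real.Gamma_pos_of_pos (s := b + 1) (by linarith)
  have := Real.Gamma_pos_of_pos (s := a + b + 2) (by linarith)
  positivity

theorem integral_rpow_mul_one_sub_rpow_mul_pow (j : ℕ) :
    ∫ t in (0:ℝ)..1, t ^ a * (1 - t) ^ b * t ^ j =
      ∫ t in (0:ℝ)..1, t ^ (a + j) * (1 - t) ^ b := by
  refine intervalIntegral.integral_congr_ae (ae_of_all _ fun t ht => ?_)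
  rw [Set.uIoc_of_le zero_le_one] at ht
  rw [Real.rpow_add ht.1, Real.rpow_natCast]
  ring

theorem integral_rpow_mul_one_sub_rpow_mul_pow_div (ha : -1 < a) (hb : -1 < b) (j : ℕ) :
    (∫ t in (0:ℝ)..1, t ^ a * (1 - t) ^ b * t ^ j) / ∫ t in (0:ℝ)..1, t ^ a * (1 - t) ^ b =
      (ascPochhammer ℝ j).eval (a + 1) / (ascPochhammer ℝ j).eval (a + b + 2) := by
  have haj : -1 < a + j := by linarith [j.cast_nonneg (α := ℝ)]
  have h1 : (0:ℝ) < a + 1 := by linarith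
  have h3 : (0:ℝ) < a + b + 2 := by linarith
  rw [integral_rpow_mul_one_sub_rpow_mul_pow, integral_rpow_mul_one_sub_rpow haj hb,
    integral_rpow_mul_one_sub_rpow ha hb, add_right_comm a, add_right_comm a j,
    add_right_comm (a + b), Real.Gamma_add_nat_eq_mul_ascPochhammer h1,
    Real.Gamma_add_nat_eq_mul_ascPochhammer h3]
  have := Real.Gamma_pos_of_pos h1
  have := Real.Gamma_pos_of_pos (s := b + 1) (by linarith)
  have := Real.Gamma_pos_of_pos h3
  have := ascPochhammer_pos j _ h3
  field_simp

end BetaIntegral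

namespace Polynomial

section Triangular

/- `hΦ` says that `Φ` is upper triangular in the monomial basis, with diagonal `μ`. -/
variable {K : Type*} [Field K] (Φ : K[X] →ₗ[K] K[X]) {μ : ℕ → K}
  (hΦ : ∀ j, Φ (X ^ j) - μ j • X ^ j ∈ degreeLT K j)
include hΦ

theorem apply_sub_smul_mem_degreeLT_of_triangular {p : K[X]} {m : ℕ} (hp : p.natDegree ≤ m) :
    Φ p - μ m • p ∈ degreeLT K m := by
  rw [p.as_sum_range' (m + 1) (Nat.lt_succ_of_le hp)]
  simp only [map_sum, Finset.smul_sum, ← Finset.sum_sub_distrib]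
  refine Submodule.sum_mem _ fun j hj => ?_
  have hjm : j ≤ m := Nat.lt_succ_iff.mp (Finset.mem_range.mp hj)
  rw [← C_mul_X_pow_eq_monomial, ← smul_eq_C_mul, map_smul, smul_comm, ← smul_sub]
  refine Submodule.smul_mem _ _ ?_
  rcases hjm.eq_or_lt with rfl | hjm
  · exact hΦ j
  · have hXj : (X ^ j : K[X]) ∈ degreeLT K m := by
      rw [mem_degreeLT, degree_X_pow]
      exact_mod_cast hjm
    rw [show Φ (X ^ j) - μ m • X ^ j = (Φ (X ^ j) - μ j • X ^ j) + (μ j - μ m) • X ^ j by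
      rw [sub_smul]; abel]
    exact add_mem (degreeLT_mono hjm.le (hΦ j)) (Submodule.smul_mem _ _ hXj)

theorem degree_apply_sub_smul_of_triangular {p : K[X]} {c : K} (hc : μ p.natDegree ≠ c) :
    (Φ p - c • p).degree = p.degree := by
  rcases eq_or_ne p 0 with rfl | hp
  · simp
  have hlead : ((μ p.natDegree - c) • p).degree = p.degree :=
    degree_smul_of_smul_regular _ (IsSMulRegular.of_ne_zero (sub_ne_zero.mpr hc))
  have hlower : (Φ p - μ p.natDegree • p).degree < ((μ p.natDegree - c) • p).degree := by
    rw [hlead, degree_eq_natDegree hp, ← mem_degreeLT]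
    exact apply_sub_smul_mem_degreeLT_of_triangular Φ hΦ le_rfl
  rw [show Φ p - c • p = (μ p.natDegree - c) • p + (Φ p - μ p.natDegree • p) by
    rw [sub_smul]; abel, degree_add_eq_left_of_degree_lt hlower, hlead]

theorem natDegree_apply_of_triangular {p : K[X]} (hμ : μ p.natDegree ≠ 0) :
    (Φ p).natDegree = p.natDegree := by
  simpa using natDegree_eq_of_degree_eq (degree_apply_sub_smul_of_triangular Φ hΦ hμ)

/- `Φ - μ k` preserves the degree of every polynomial of degree `< k`, so it is injective, hence
bijective, on `degreeLT K k`; the eigenvector is `X ^ k - s` where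
`(Φ - μ k) s = (Φ - μ k) X ^ k`. -/
theorem exists_monic_eigenvector_of_triangular (hμ : Function.Injective μ) (k : ℕ) :
    ∃ p : K[X], p.Monic ∧ p.natDegree = k ∧ Φ p = μ k • p := by
  set L := Φ - μ k • LinearMap.id
  have hL : ∀ r, L r = Φ r - μ k • r := fun r => rfl
  have hdeg : ∀ r ∈ degreeLT K k, (L r).degree = r.degree := by
    intro r hr
    rcases eq_or_ne r 0 with rfl | hr0
    · simp
    rw [mem_degreeLT, degree_eq_natDegree hr0, Nat.cast_lt] at hr
    exact degree_apply_sub_smul_of_triangular Φ hΦ (hμ.ne hr.ne)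
  have hmaps : ∀ r ∈ degreeLT K k, L r ∈ degreeLT K k := fun r hr => by
    rw [mem_degreeLT, hdeg r hr]
    exact mem_degreeLT.mp hr
  have hinj : Set.InjOn L (degreeLT K k) := by
    intro r hr s hs hrs
    rw [← sub_eq_zero, ← degree_eq_bot, ← hdeg _ (sub_mem hr hs), map_sub, hrs, sub_self,
      degree_zero]
  obtain ⟨s, hs, hLs⟩ := (LinearMap.injOn_iff_surjOn hmaps).mp hinj (hL (X ^ k) ▸ hΦ k)
  have hsk : s.degree < k := mem_degreeLT.mp hs
  refine ⟨X ^ k - s, monic_X_pow_sub hsk, natDegree_eq_of_degree_eq_some ?_, ?_⟩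
  · rw [degree_sub_eq_left_of_degree_lt (by rwa [degree_X_pow]), degree_X_pow]
  · rw [← sub_eq_zero, ← hL, map_sub, hLs, sub_self]

end Triangular

end Polynomial

section BetaOperator

variable {n α β x : ℝ} (hα : -1 < α) (hβ : -1 < β) (hn : 0 ≤ n)
  (hx : x ∈ Set.Icc (0:ℝ) 1)
include hα hβ hn hx

theorem neg_one_lt_Bop_exponents : -1 < n * x + α ∧ -1 < n - n * x + β :=
  ⟨by nlinarith [hx.1], by nlinarith [hx.2]⟩

theorem Bop_pow (j : ℕ) :
    Bop n α β (fun t => t ^ j) x =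
      (ascPochhammer ℝ j).eval (n * x + α + 1) / (ascPochhammer ℝ j).eval (n + α + β + 2) := by
  obtain ⟨ha, hb⟩ := neg_one_lt_Bop_exponents hα hβ hn hx
  rw [Bop, integral_rpow_mul_one_sub_rpow_mul_pow_div ha hb,
    show n * x + α + (n - n * x + β) + 2 = n + α + β + 2 by ring]

theorem Bop_eval (p : ℝ[X]) :
    Bop n α β (fun t => p.eval t) x = p.sum fun j c => c * Bop n α β (fun t => t ^ j) x := by
  obtain ⟨ha, hb⟩ := neg_one_lt_Bop_exponents hα hβ hn hx
  have hw := intervalIntegrable_rpow_mul_one_sub_rpow ha hb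
  simp only [Bop, eval_eq_sum, Polynomial.sum_def, Finset.mul_sum]
  rw [intervalIntegral.integral_finsetSum fun j _ =>
    hw.mul_continuousOn (g := fun t => p.coeff j * t ^ j) (by fun_prop), Finset.sum_div]
  simp only [mul_left_comm _ (p.coeff _), intervalIntegral.integral_const_mul, mul_div_assoc]

end BetaOperator

noncomputable def betaMonomialImage (n α β : ℝ) (j : ℕ) : ℝ[X] :=
  C ((ascPochhammer ℝ j).eval (n + α + β + 2))⁻¹ * (ascPochhammer ℝ j).comp (C n * X + C (α + 1))

/- `B_n^{α,β}` on polynomials, as a polynomial in `x`: see `Bop_eval_eq_eval_betaOpPoly`. -/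
noncomputable def betaOpPoly (n α β : ℝ) : ℝ[X] →ₗ[ℝ] ℝ[X] :=
  lsum fun j => LinearMap.toSpanSingleton ℝ ℝ[X] (betaMonomialImage n α β j)

noncomputable def betaEigenvalue (n α β : ℝ) (j : ℕ) : ℝ :=
  n ^ j / (ascPochhammer ℝ j).eval (n + α + β + 2)

theorem betaMonomialImage_eval (n α β x : ℝ) (j : ℕ) :
    (betaMonomialImage n α β j).eval x =
      (ascPochhammer ℝ j).eval (n * x + α + 1) / (ascPochhammer ℝ j).eval (n + α + β + 2) := by
  simp [betaMonomialImage, eval_comp, div_eq_inv_mul, add_assoc]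

theorem betaOpPoly_X_pow (n α β : ℝ) (j : ℕ) :
    betaOpPoly n α β (X ^ j) = betaMonomialImage n α β j := by
  simp [betaOpPoly, ← monomial_one_right_eq_X_pow, sum_monomial_index]

theorem Bop_eval_eq_eval_betaOpPoly {n α β x : ℝ} (hα : -1 < α) (hβ : -1 < β) (hn : 0 ≤ n)
    (hx : x ∈ Set.Icc (0:ℝ) 1) (p : ℝ[X]) :
    Bop n α β (fun t => p.eval t) x = (betaOpPoly n α β p).eval x := by
  simp only [Bop_eval hα hβ hn hx, Bop_pow hα hβ hn hx, betaOpPoly, lsum_apply,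
    Polynomial.sum_def, eval_finsetSum, LinearMap.toSpanSingleton_apply, eval_smul, smul_eq_mul,
    betaMonomialImage_eval]

section Eigenvalues

variable {n α β : ℝ}

theorem betaMonomialImage_leadingCoeff (hn : n ≠ 0) (j : ℕ) :
    (betaMonomialImage n α β j).leadingCoeff = betaEigenvalue n α β j := by
  rw [betaMonomialImage, leadingCoeff_mul, leadingCoeff_C,
    leadingCoeff_comp (by rw [natDegree_linear hn]; simp), (monic_ascPochhammer ℝ j).leadingCoeff,
    leadingCoeff_linear hn, ascPochhammer_natDegree, one_mul, betaEigenvalue, div_eq_inv_mul]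

theorem betaEigenvalue_pos (hn : 0 < n) (hαβ : 0 < α + β + 2) (j : ℕ) :
    0 < betaEigenvalue n α β j := by
  have := ascPochhammer_pos j (n + α + β + 2) (by linarith)
  unfold betaEigenvalue
  positivity

theorem betaEigenvalue_strictAnti (hn : 0 < n) (hαβ : 0 < α + β + 2) :
    StrictAnti (betaEigenvalue n α β) := by
  refine strictAnti_nat_of_succ_lt fun j => ?_
  have hnj : n < n + α + β + 2 + j := by linarith [j.cast_nonneg (α := ℝ)]
  simp only [betaEigenvalue, pow_succ, ascPochhammer_succ_eval]
  rw [mul_div_mul_comm]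
  exact mul_lt_of_lt_one_right (betaEigenvalue_pos hn hαβ j) ((div_lt_one (by linarith)).mpr hnj)

theorem betaMonomialImage_natDegree (hn : 0 < n) (hαβ : 0 < α + β + 2) (j : ℕ) :
    (betaMonomialImage n α β j).natDegree = j := by
  have hinv := inv_ne_zero (ascPochhammer_pos j (n + α + β + 2) (by linarith)).ne'
  rw [betaMonomialImage, natDegree_C_mul hinv, natDegree_comp, ascPochhammer_natDegree,
    natDegree_linear hn.ne', mul_one]

theorem betaOpPoly_X_pow_sub_mem_degreeLT (hn : 0 < n) (hαβ : 0 < α + β + 2) (j : ℕ) :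
    betaOpPoly n α β (X ^ j) - betaEigenvalue n α β j • X ^ j ∈ degreeLT ℝ j := by
  have hev := (betaEigenvalue_pos hn hαβ j).ne'
  have hlead := betaMonomialImage_leadingCoeff (α := α) (β := β) hn.ne' j
  have hne : betaMonomialImage n α β j ≠ 0 := leadingCoeff_ne_zero.mp (hlead ▸ hev)
  have hdeg : (betaMonomialImage n α β j).degree = j := by
    rw [degree_eq_natDegree hne, betaMonomialImage_natDegree hn hαβ]
  rw [betaOpPoly_X_pow, mem_degreeLT, ← hdeg]
  refine degree_sub_lt_left ?_ hne ?_
  · rw [hdeg, smul_eq_C_mul, degree_C_mul_X_pow j hev]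
  · rw [hlead, smul_eq_C_mul, leadingCoeff_C_mul_X_pow]

end Eigenvalues

theorem beta_op_monomials (α β : ℝ) (hα : α > -1) (hβ : β > -1)
    (n : ℕ) (hn : 1 ≤ n) (k : ℕ) :
    (∀ x ∈ Set.Icc (0:ℝ) 1,
      Bop n α β (fun t => t ^ k) x =
        (ascPochhammer ℝ k).eval (n * x + α + 1) /
          (ascPochhammer ℝ k).eval (n + α + β + 2)) ∧
    (∀ p : Polynomial ℝ, p.natDegree = k →
      ∃ q : Polynomial ℝ, q.natDegree = k ∧
        ∀ x ∈ Set.Icc (0:ℝ) 1, Bop n α β (fun t => p.eval t) x = q.eval x) ∧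
    ∃ p : Polynomial ℝ, p.Monic ∧ p.natDegree = k ∧
      ∀ x ∈ Set.Icc (0:ℝ) 1,
        Bop n α β (fun t => p.eval t) x =
          (n : ℝ) ^ k / (ascPochhammer ℝ k).eval (n + α + β + 2) * p.eval x := by
  have hn₀ : (0:ℝ) < n := by exact_mod_cast hn
  have hαβ : 0 < α + β + 2 := by linarith
  have htri := betaOpPoly_X_pow_sub_mem_degreeLT hn₀ hαβ
  have hBop : ∀ x ∈ Set.Icc (0:ℝ) 1, ∀ p : ℝ[X],
      Bop n α β (fun t => p.eval t) x = (betaOpPoly n α β p).eval x :=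
    fun x hx => Bop_eval_eq_eval_betaOpPoly hα hβ hn₀.le hx
  refine ⟨fun x hx => Bop_pow hα hβ hn₀.le hx k,
    fun p hp => ⟨betaOpPoly n α β p, ?_, fun x hx => hBop x hx p⟩, ?_⟩
  · rw [natDegree_apply_of_triangular _ htri (betaEigenvalue_pos hn₀ hαβ _).ne', hp]
  · obtain ⟨p, hmonic, hdeg, heig⟩ := exists_monic_eigenvector_of_triangular _ htri
      (betaEigenvalue_strictAnti hn₀ hαβ).injective k
    refine ⟨p, hmonic, hdeg, fun x hx => ?_⟩
    rw [hBop x hx, heig, eval_smul, smul_eq_mul, betaEigenvalue]
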